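/- The element z = g(c)·b + (g(c) − u)·a − a² lies in the center of 𝒢, i.e. z·x = x·z for all x ∈ 𝒢. -/

import Mathlib

open Polynomial

noncomputable section

/-- `h = c·g'(c)` in the free algebra on generators `a = ι 0`, `b = ι 1`, `c = ι 2`,
`u = ι 3`. -/
def Gh (k : Type) [Field k] (g : k[X]) : FreeAlgebra k (Fin 4) :=
  FreeAlgebra.ι k 2 * aeval (FreeAlgebra.ι k 2) (derivative g)

/-- `γ = h + u + 2a` in the free algebra. -/
def Gγ (k : Type) [Field k] (g : k[X]) : FreeAlgebra k (Fin 4) :=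
  Gh k g + FreeAlgebra.ι k 3 + 2 * FreeAlgebra.ι k 0

/-- Defining relations of the generalized Jordanian matrix algebra `𝒢` (for `f = X·g`):
with `a = ι 0`, `b = ι 1`, `c = ι 2`, `u = ι 3`, `h = c·g'(c)`, `γ = h + u + 2a`,
the relations are `a·c = c·a + c·g(c)`, `c·u = u·c`, `a·u = u·a + u·g(c)`,
`b·c = c·b + c·γ`, `b·u = u·b + u·γ`, and `b·a = (a + h)·b + (h − u)·a`. -/
inductive GRel (k : Type) [Field k] (g : k[X]) :
    FreeAlgebra k (Fin 4) → FreeAlgebra k (Fin 4) → Prop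
  | ac : GRel k g (FreeAlgebra.ι k 0 * FreeAlgebra.ι k 2)
      (FreeAlgebra.ι k 2 * FreeAlgebra.ι k 0 +
        FreeAlgebra.ι k 2 * aeval (FreeAlgebra.ι k 2) g)
  | cu : GRel k g (FreeAlgebra.ι k 2 * FreeAlgebra.ι k 3)
      (FreeAlgebra.ι k 3 * FreeAlgebra.ι k 2)
  | au : GRel k g (FreeAlgebra.ι k 0 * FreeAlgebra.ι k 3)
      (FreeAlgebra.ι k 3 * FreeAlgebra.ι k 0 +
        FreeAlgebra.ι k 3 * aeval (FreeAlgebra.ι k 2) g)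
  | bc : GRel k g (FreeAlgebra.ι k 1 * FreeAlgebra.ι k 2)
      (FreeAlgebra.ι k 2 * FreeAlgebra.ι k 1 + FreeAlgebra.ι k 2 * Gγ k g)
  | bu : GRel k g (FreeAlgebra.ι k 1 * FreeAlgebra.ι k 3)
      (FreeAlgebra.ι k 3 * FreeAlgebra.ι k 1 + FreeAlgebra.ι k 3 * Gγ k g)
  | ba : GRel k g (FreeAlgebra.ι k 1 * FreeAlgebra.ι k 0)
      ((FreeAlgebra.ι k 0 + Gh k g) * FreeAlgebra.ι k 1 +
        (Gh k g - FreeAlgebra.ι k 3) * FreeAlgebra.ι k 0)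

/-- The generalized Jordanian matrix algebra `𝒢` (denoted `𝒢_f` for `f = X·g`). -/
abbrev GAlg (k : Type) [Field k] (g : k[X]) := RingQuot (GRel k g)

/-- The generator `a` of `𝒢`. -/
def Ga (k : Type) [Field k] (g : k[X]) : GAlg k g :=
  RingQuot.mkAlgHom k (GRel k g) (FreeAlgebra.ι k 0)

/-- The generator `b` of `𝒢`. -/
def Gb (k : Type) [Field k] (g : k[X]) : GAlg k g :=
  RingQuot.mkAlgHom k (GRel k g) (FreeAlgebra.ι k 1)

/-- The generator `c` of `𝒢`. -/
def Gc (k : Type) [Field k] (g : k[X]) : GAlg k g :=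
  RingQuot.mkAlgHom k (GRel k g) (FreeAlgebra.ι k 2)

/-- The generator `u` of `𝒢`. -/
def Gu (k : Type) [Field k] (g : k[X]) : GAlg k g :=
  RingQuot.mkAlgHom k (GRel k g) (FreeAlgebra.ι k 3)

/-- The central element `z = g(c)·b + (g(c) − u)·a − a²` of `𝒢`. -/
def Gz (k : Type) [Field k] (g : k[X]) : GAlg k g :=
  aeval (Gc k g) g * Gb k g + (aeval (Gc k g) g - Gu k g) * Ga k g - Ga k g ^ 2

-- auxiliary defs
variable (k : Type) [Field k] (g : k[X])

/-- `G = g(c)` -/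
def GG : GAlg k g := aeval (Gc k g) g
/-- `H = c·g'(c)` -/
def GH : GAlg k g := aeval (Gc k g) (X * derivative g)
/-- `D = c²·g''(c)` -/
def GD : GAlg k g := aeval (Gc k g) (X ^ 2 * derivative (derivative g))
/-- `γ = H + u + 2a` -/
def Gga : GAlg k g := GH k g + Gu k g + 2 * Ga k g

lemma mul_ext {R : Type*} [Semiring R] {x y t : R} (h : x * y = t) (z : R) :
    x * (y * z) = t * z := by rw [← mul_assoc, h]

lemma mul_two_left {R : Type*} [Ring R] (x y : R) :
    x * (2 * y) = 2 * (x * y) := by rw [two_mul, mul_add, two_mul]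

lemma rel_ac : Ga k g * Gc k g = Gc k g * Ga k g + Gc k g * GG k g := by
  have := RingQuot.mkAlgHom_rel k (GRel.ac (k := k) (g := g))
  simpa [Ga, Gc, GG, map_mul, map_add, ← aeval_algHom_apply] using this

lemma rel_cu : Gc k g * Gu k g = Gu k g * Gc k g := by
  have := RingQuot.mkAlgHom_rel k (GRel.cu (k := k) (g := g))
  simpa [Gc, Gu, map_mul] using this

lemma rel_au : Ga k g * Gu k g = Gu k g * Ga k g + Gu k g * GG k g := by
  have := RingQuot.mkAlgHom_rel k (GRel.au (k := k) (g := g))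
  simpa [Ga, Gu, GG, Gc, map_mul, map_add, ← aeval_algHom_apply] using this

lemma mk_Gh : RingQuot.mkAlgHom k (GRel k g) (Gh k g) = GH k g := by
  simp only [Gh, GH, map_mul, aeval_X, Gc]
  rw [aeval_algHom_apply]

lemma mk_Gγ : RingQuot.mkAlgHom k (GRel k g) (Gγ k g) = Gga k g := by
  simp only [Gγ, Gga, map_add, map_mul, mk_Gh, Ga, Gu, map_ofNat]

lemma rel_bc : Gb k g * Gc k g = Gc k g * Gb k g + Gc k g * Gga k g := by
  have := RingQuot.mkAlgHom_rel k (GRel.bc (k := k) (g := g))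
  simp only [map_mul, map_add, mk_Gγ] at this
  simpa [Gb, Gc] using this

lemma rel_bu : Gb k g * Gu k g = Gu k g * Gb k g + Gu k g * Gga k g := by
  have := RingQuot.mkAlgHom_rel k (GRel.bu (k := k) (g := g))
  simp only [map_mul, map_add, mk_Gγ] at this
  simpa [Gb, Gu] using this

lemma rel_ba : Gb k g * Ga k g =
    (Ga k g + GH k g) * Gb k g + (GH k g - Gu k g) * Ga k g := by
  have := RingQuot.mkAlgHom_rel k (GRel.ba (k := k) (g := g))
  simp only [map_mul, map_add, map_sub, mk_Gh] at this
  simpa [Ga, Gb, Gu] using this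

lemma commute_aeval {x : GAlg k g} (h : Commute x (Gc k g)) (p : k[X]) :
    Commute x (aeval (Gc k g) p) := by
  induction p using Polynomial.induction_on with
  | C a => simpa [aeval_C, Commute, SemiconjBy] using ((Algebra.commutes a x).symm)
  | add p q hp hq => simpa [map_add] using hp.add_right hq
  | monomial n a hp =>
    have : aeval (Gc k g) (C a * X ^ (n + 1)) =
        aeval (Gc k g) (C a * X ^ n) * Gc k g := by
      simp [map_mul, pow_succ, mul_assoc]
    rw [this]; exact hp.mul_right h

lemma comm_c_aeval (p : k[X]) : Commute (Gc k g) (aeval (Gc k g) p) :=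
  commute_aeval k g (Commute.refl _) p

lemma comm_u_aeval (p : k[X]) : Commute (Gu k g) (aeval (Gc k g) p) :=
  commute_aeval k g ((rel_cu k g).symm) p

lemma comm_aeval_aeval (p q : k[X]) :
    Commute (aeval (Gc k g) p) (aeval (Gc k g) q) :=
  commute_aeval k g ((comm_c_aeval k g p).symm) q

lemma P1 (n : ℕ) : Ga k g * Gc k g ^ n =
    Gc k g ^ n * Ga k g + (n : GAlg k g) * (Gc k g ^ n * GG k g) := by
  induction n with
  | zero => simp
  | succ n ih =>
    have sGC : GG k g * Gc k g = Gc k g * GG k g := ((comm_c_aeval k g g).symm).eq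
    rw [pow_succ, ← mul_assoc, ih, add_mul, mul_assoc, rel_ac,
      mul_assoc ((n : GAlg k g)), mul_assoc, sGC]
    push_cast
    noncomm_ring

lemma P2 (n : ℕ) : Gb k g * Gc k g ^ n =
    Gc k g ^ n * Gb k g + (n : GAlg k g) * (Gc k g ^ n * Gga k g)
      + ((n * (n - 1) : ℕ) : GAlg k g) * (Gc k g ^ n * GG k g) := by
  induction n with
  | zero => simp
  | succ n ih =>
    have sGC : GG k g * Gc k g = Gc k g * GG k g := ((comm_c_aeval k g g).symm).eq
    have sγC : Gga k g * Gc k g = Gc k g * Gga k g + 2 * (Gc k g * GG k g) := by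
      have sHC : GH k g * Gc k g = Gc k g * GH k g :=
        ((comm_c_aeval k g _).symm).eq
      rw [Gga, add_mul, add_mul, sHC, ← rel_cu, mul_assoc, rel_ac]
      noncomm_ring
    rw [pow_succ, ← mul_assoc, ih, add_mul, add_mul, mul_assoc, rel_bc,
      mul_assoc ((n : GAlg k g)), mul_assoc (Gc k g ^ n), sγC,
      mul_assoc (((n * (n - 1) : ℕ) : GAlg k g)), mul_assoc (Gc k g ^ n) (GG k g), sGC]
    have harith : ((n + 1) * ((n + 1) - 1) : ℕ) = n * (n - 1) + 2 * n := by
      cases n <;> simp <;> ring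
    rw [harith]
    push_cast
    noncomm_ring

lemma L1 (p : k[X]) : Ga k g * aeval (Gc k g) p =
    aeval (Gc k g) p * Ga k g + aeval (Gc k g) (X * derivative p) * GG k g := by
  induction p using Polynomial.induction_on with
  | C a => simp [aeval_C, Algebra.commutes]
  | add p q hp hq =>
    simp only [map_add, add_mul, mul_add, derivative_add, hp, hq]
    abel
  | monomial n a _ =>
    have key := P1 k g (n + 1)
    have e1 : aeval (Gc k g) (C a * X ^ (n + 1)) =
        algebraMap k (GAlg k g) a * Gc k g ^ (n + 1) := by simp [map_mul]
    have hpoly : X * derivative (C a * X ^ (n + 1)) =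
        C a * (((n + 1 : ℕ) : k[X]) * X ^ (n + 1)) := by
      simp only [derivative_C_mul, derivative_X_pow, Nat.add_sub_cancel,
        Nat.cast_add, Nat.cast_one, C_add, C_1, C_eq_natCast]
      ring
    have e2 : aeval (Gc k g) (X * derivative (C a * X ^ (n + 1))) =
        algebraMap k (GAlg k g) a * (((n + 1 : ℕ) : GAlg k g) * Gc k g ^ (n + 1)) := by
      rw [hpoly]
      simp [map_mul, aeval_C, aeval_natCast, map_natCast]
    rw [e1, e2, ← mul_assoc, ← Algebra.commutes a (Ga k g), mul_assoc, key, mul_add]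
    simp only [mul_assoc]

lemma L2 (p : k[X]) : Gb k g * aeval (Gc k g) p =
    aeval (Gc k g) p * Gb k g + aeval (Gc k g) (X * derivative p) * Gga k g
      + aeval (Gc k g) (X ^ 2 * derivative (derivative p)) * GG k g := by
  induction p using Polynomial.induction_on with
  | C a => simp [aeval_C, Algebra.commutes]
  | add p q hp hq =>
    simp only [map_add, add_mul, mul_add, derivative_add, hp, hq]
    abel
  | monomial n a _ =>
    have key := P2 k g (n + 1)
    simp only [Nat.add_sub_cancel] at key
    have e1 : aeval (Gc k g) (C a * X ^ (n + 1)) =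
        algebraMap k (GAlg k g) a * Gc k g ^ (n + 1) := by simp [map_mul]
    have hpoly : X * derivative (C a * X ^ (n + 1)) =
        C a * (((n + 1 : ℕ) : k[X]) * X ^ (n + 1)) := by
      simp only [derivative_C_mul, derivative_X_pow, Nat.add_sub_cancel,
        Nat.cast_add, Nat.cast_one, C_add, C_1, C_eq_natCast]
      ring
    have e2 : aeval (Gc k g) (X * derivative (C a * X ^ (n + 1))) =
        algebraMap k (GAlg k g) a * (((n + 1 : ℕ) : GAlg k g) * Gc k g ^ (n + 1)) := by
      rw [hpoly]
      simp [map_mul, aeval_C, aeval_natCast, map_natCast]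
    have hpoly2 : X ^ 2 * derivative (derivative (C a * X ^ (n + 1))) =
        C a * ((((n + 1) * n : ℕ) : k[X]) * X ^ (n + 1)) := by
      rcases n with _ | m
      · simp
      · rw [derivative_C_mul, derivative_X_pow, Nat.add_sub_cancel, ← mul_assoc, ← C_mul,
          derivative_C_mul, derivative_X_pow, Nat.add_sub_cancel]
        push_cast [C_mul, C_add, C_1, C_eq_natCast, map_ofNat]
        ring
    have e3 : aeval (Gc k g) (X ^ 2 * derivative (derivative (C a * X ^ (n + 1)))) =
        algebraMap k (GAlg k g) a * ((((n + 1) * n : ℕ) : GAlg k g) * Gc k g ^ (n + 1)) := by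
      rw [hpoly2]
      simp [map_mul, aeval_C, aeval_natCast, map_natCast]
    rw [e1, e2, e3, ← mul_assoc, ← Algebra.commutes a (Gb k g), mul_assoc, key,
      mul_add, mul_add]
    simp only [mul_assoc]

-- ordered swap rules (normal order: C < G < H < D < U < A < B)
lemma sUC : Gu k g * Gc k g = Gc k g * Gu k g := (rel_cu k g).symm
lemma sGC : GG k g * Gc k g = Gc k g * GG k g := ((comm_c_aeval k g g).symm).eq
lemma sHC : GH k g * Gc k g = Gc k g * GH k g := ((comm_c_aeval k g _).symm).eq
lemma sDC : GD k g * Gc k g = Gc k g * GD k g := ((comm_c_aeval k g _).symm).eq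
lemma sUG : Gu k g * GG k g = GG k g * Gu k g := (comm_u_aeval k g g).eq
lemma sUH : Gu k g * GH k g = GH k g * Gu k g := (comm_u_aeval k g _).eq
lemma sUD : Gu k g * GD k g = GD k g * Gu k g := (comm_u_aeval k g _).eq
lemma sHG : GH k g * GG k g = GG k g * GH k g := (comm_aeval_aeval k g _ _).eq
lemma sDG : GD k g * GG k g = GG k g * GD k g := (comm_aeval_aeval k g _ _).eq
lemma sDH : GD k g * GH k g = GH k g * GD k g := (comm_aeval_aeval k g _ _).eq

lemma rA_G : Ga k g * GG k g = GG k g * Ga k g + GG k g * GH k g := by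
  have h := L1 k g g
  have c := sHG k g
  rw [GG, GH] at *
  rw [h, c]

lemma rA_H : Ga k g * GH k g =
    GH k g * Ga k g + GG k g * GH k g + GG k g * GD k g := by
  have h := L1 k g (X * derivative g)
  have hp : X * derivative (X * derivative g) =
      X * derivative g + X ^ 2 * derivative (derivative g) := by
    rw [derivative_mul, derivative_X]
    ring
  rw [hp, map_add] at h
  have c1 := sHG k g; have c2 := sDG k g
  rw [GG, GH, GD] at *
  rw [h, add_mul, c1, c2, add_assoc]

lemma rB_C : Gb k g * Gc k g = Gc k g * Gb k g + Gc k g * GH k g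
    + Gc k g * Gu k g + 2 * (Gc k g * Ga k g) := by
  rw [rel_bc, Gga]
  simp only [mul_add, mul_two_left]
  abel

lemma rB_U : Gb k g * Gu k g = Gu k g * Gb k g + GH k g * Gu k g
    + Gu k g * Gu k g + 2 * (Gu k g * Ga k g) := by
  rw [rel_bu, Gga]
  simp only [mul_add, mul_two_left, sUH]
  abel

lemma rB_G : Gb k g * GG k g = GG k g * Gb k g + GH k g * GH k g
    + GH k g * Gu k g + 2 * (GH k g * Ga k g) + GD k g * GG k g := by
  have h := L2 k g g
  have e : Gb k g * GG k g = GG k g * Gb k g + GH k g * Gga k g + GD k g * GG k g := by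
    rw [GG, GH, GD] at *
    exact h
  rw [e, Gga]
  simp only [mul_add, mul_two_left]
  abel

lemma rB_A : Gb k g * Ga k g = Ga k g * Gb k g + GH k g * Gb k g
    + GH k g * Ga k g - Gu k g * Ga k g := by
  rw [rel_ba]
  simp only [add_mul, sub_mul]
  abel

lemma zC : Gz k g * Gc k g = Gc k g * Gz k g := by
  have hGz : Gz k g = GG k g * Gb k g + (GG k g - Gu k g) * Ga k g - Ga k g ^ 2 := rfl
  simp only [hGz, pow_two, sub_mul, mul_sub, add_mul, mul_add, mul_assoc,
    rB_C k g, mul_ext (rB_C k g), rB_U k g, mul_ext (rB_U k g),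
    rB_G k g, mul_ext (rB_G k g), rB_A k g, mul_ext (rB_A k g),
    rel_ac k g, mul_ext (rel_ac k g), rel_au k g, mul_ext (rel_au k g),
    rA_G k g, mul_ext (rA_G k g), rA_H k g, mul_ext (rA_H k g),
    sUC k g, mul_ext (sUC k g), sGC k g, mul_ext (sGC k g),
    sHC k g, mul_ext (sHC k g), sDC k g, mul_ext (sDC k g),
    sUG k g, mul_ext (sUG k g), sUH k g, mul_ext (sUH k g),
    sUD k g, mul_ext (sUD k g), sHG k g, mul_ext (sHG k g),
    sDG k g, mul_ext (sDG k g), sDH k g, mul_ext (sDH k g), mul_two_left]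
  noncomm_ring


lemma zU : Gz k g * Gu k g = Gu k g * Gz k g := by
  have hGz : Gz k g = GG k g * Gb k g + (GG k g - Gu k g) * Ga k g - Ga k g ^ 2 := rfl
  simp only [hGz, pow_two, sub_mul, mul_sub, add_mul, mul_add, mul_assoc,
    rB_C k g, mul_ext (rB_C k g), rB_U k g, mul_ext (rB_U k g),
    rB_G k g, mul_ext (rB_G k g), rB_A k g, mul_ext (rB_A k g),
    rel_ac k g, mul_ext (rel_ac k g), rel_au k g, mul_ext (rel_au k g),
    rA_G k g, mul_ext (rA_G k g), rA_H k g, mul_ext (rA_H k g),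
    sUC k g, mul_ext (sUC k g), sGC k g, mul_ext (sGC k g),
    sHC k g, mul_ext (sHC k g), sDC k g, mul_ext (sDC k g),
    sUG k g, mul_ext (sUG k g), sUH k g, mul_ext (sUH k g),
    sUD k g, mul_ext (sUD k g), sHG k g, mul_ext (sHG k g),
    sDG k g, mul_ext (sDG k g), sDH k g, mul_ext (sDH k g), mul_two_left]
  noncomm_ring

lemma zA : Gz k g * Ga k g = Ga k g * Gz k g := by
  have hGz : Gz k g = GG k g * Gb k g + (GG k g - Gu k g) * Ga k g - Ga k g ^ 2 := rfl
  simp only [hGz, pow_two, sub_mul, mul_sub, add_mul, mul_add, mul_assoc,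
    rB_C k g, mul_ext (rB_C k g), rB_U k g, mul_ext (rB_U k g),
    rB_G k g, mul_ext (rB_G k g), rB_A k g, mul_ext (rB_A k g),
    rel_ac k g, mul_ext (rel_ac k g), rel_au k g, mul_ext (rel_au k g),
    rA_G k g, mul_ext (rA_G k g), rA_H k g, mul_ext (rA_H k g),
    sUC k g, mul_ext (sUC k g), sGC k g, mul_ext (sGC k g),
    sHC k g, mul_ext (sHC k g), sDC k g, mul_ext (sDC k g),
    sUG k g, mul_ext (sUG k g), sUH k g, mul_ext (sUH k g),
    sUD k g, mul_ext (sUD k g), sHG k g, mul_ext (sHG k g),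
    sDG k g, mul_ext (sDG k g), sDH k g, mul_ext (sDH k g), mul_two_left]
  noncomm_ring

lemma zB : Gz k g * Gb k g = Gb k g * Gz k g := by
  have hGz : Gz k g = GG k g * Gb k g + (GG k g - Gu k g) * Ga k g - Ga k g ^ 2 := rfl
  simp only [hGz, pow_two, sub_mul, mul_sub, add_mul, mul_add, mul_assoc,
    rB_C k g, mul_ext (rB_C k g), rB_U k g, mul_ext (rB_U k g),
    rB_G k g, mul_ext (rB_G k g), rB_A k g, mul_ext (rB_A k g),
    rel_ac k g, mul_ext (rel_ac k g), rel_au k g, mul_ext (rel_au k g),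
    rA_G k g, mul_ext (rA_G k g), rA_H k g, mul_ext (rA_H k g),
    sUC k g, mul_ext (sUC k g), sGC k g, mul_ext (sGC k g),
    sHC k g, mul_ext (sHC k g), sDC k g, mul_ext (sDC k g),
    sUG k g, mul_ext (sUG k g), sUH k g, mul_ext (sUH k g),
    sUD k g, mul_ext (sUD k g), sHG k g, mul_ext (sHG k g),
    sDG k g, mul_ext (sDG k g), sDH k g, mul_ext (sDH k g), mul_two_left]
  noncomm_ring

theorem stmt14 (k : Type) [Field k] [IsAlgClosed k] [CharZero k]
    (g : k[X]) (hg : 1 ≤ g.natDegree) :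
    ∀ x : GAlg k g, Gz k g * x = x * Gz k g := by
  intro x
  obtain ⟨y, rfl⟩ := RingQuot.mkAlgHom_surjective k (GRel k g) x
  refine FreeAlgebra.induction k (Fin 4)
    (motive := fun y => Gz k g * RingQuot.mkAlgHom k (GRel k g) y =
      RingQuot.mkAlgHom k (GRel k g) y * Gz k g) ?_ ?_ ?_ ?_ y
  · intro r
    rw [AlgHom.commutes]
    exact (Algebra.commutes r (Gz k g)).symm
  · intro i
    fin_cases i
    · exact zA k g
    · exact zB k g
    · exact zC k g
    · exact zU k g
  · intro p q hp hq
    rw [map_mul, ← mul_assoc, hp, mul_assoc, hq, mul_assoc]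
  · intro p q hp hq
    rw [map_add, mul_add, add_mul, hp, hq]
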